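/- arXiv:1406.3152 — 2 statements merged into one kernel-verified Lean document; each statement's English description precedes it below -/
import Mathlib

section
/- Every abelian ℓ-group with the principal projection property (i.e., every projectable abelian ℓ-group) is Archimedean. -/
/-- The absolute value `|g| = (g ⊔ 0) + ((-g) ⊔ 0)` in a lattice-ordered abelian group. -/
def absl {A : Type*} [Lattice A] [AddCommGroup A] (g : A) : A :=
  (g ⊔ 0) + (-g ⊔ 0)

/-- The polar `T^⊥ = {x : |x| ⊓ |t| = 0 for all t ∈ T}`. -/
def polar {A : Type*} [Lattice A] [AddCommGroup A] (T : Set A) : Set A :=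
  {x : A | ∀ t ∈ T, absl x ⊓ absl t = 0}

/-- An ideal of an abelian ℓ-group: an order-convex sublattice subgroup. -/
structure IsIdeal {A : Type*} [Lattice A] [AddCommGroup A] (I : Set A) : Prop where
  zero_mem : (0 : A) ∈ I
  add_mem : ∀ ⦃a b : A⦄, a ∈ I → b ∈ I → a + b ∈ I
  neg_mem : ∀ ⦃a : A⦄, a ∈ I → -a ∈ I
  sup_mem : ∀ ⦃a b : A⦄, a ∈ I → b ∈ I → a ⊔ b ∈ I
  inf_mem : ∀ ⦃a b : A⦄, a ∈ I → b ∈ I → a ⊓ b ∈ I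
  convex : ∀ ⦃a b c : A⦄, a ∈ I → c ∈ I → a ≤ b → b ≤ c → b ∈ I

/-- A band: an ideal closed under all suprema that exist in `A`. -/
structure IsBand {A : Type*} [Lattice A] [AddCommGroup A] (I : Set A) : Prop where
  ideal : IsIdeal I
  sup_closed : ∀ S : Set A, S ⊆ I → ∀ a : A, IsLUB S a → a ∈ I

/-- The principal band generated by `x`: the smallest band containing `x`. -/
def principalBand {A : Type*} [Lattice A] [AddCommGroup A] (x : A) : Set A :=
  ⋂₀ {I : Set A | IsBand I ∧ x ∈ I}

/-- A projection band: every element of the group splits as a sum of an element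
of `B` and an element of `B^⊥`. -/
def IsProjectionBand {A : Type*} [Lattice A] [AddCommGroup A] (B : Set A) : Prop :=
  ∀ g : A, ∃ a ∈ B, ∃ b ∈ polar B, g = a + b

/-- `A` is Archimedean: whenever `0 ≤ n • g ≤ h` for all integers `n ≥ 1`, then `g = 0`. -/
def IsArch (A : Type*) [Lattice A] [AddCommGroup A] : Prop :=
  ∀ g h : A, (∀ n : ℕ, 1 ≤ n → 0 ≤ n • g ∧ n • g ≤ h) → g = 0

/-!
Let `0 ≤ n • g ≤ v` for all `n`. Split `v = a + b` with `a` in the principal band of `g` and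
`b` disjoint from it; both parts are positive, and since `b` is disjoint from every `n • g`, all
multiples of `g` lie below `a`. The elements `x` with `|x| = ⨆ₙ |x| ⊓ n • g` form a band containing
`g`, hence containing `a`, so `a = ⨆ₙ n • g`. But then also `a = ⨆ₙ (n + 1) • g = a + g`,
so `g = 0`.
-/

open Set

section LatticeGroup

variable {A : Type*} [Lattice A] [AddCommGroup A]

/-- For `0 ≤ g`, `IsSupOfInfNsmul g |y|` characterises the elements `y` of the principal band
generated by `g`. -/
def IsSupOfInfNsmul (g x : A) : Prop :=
  IsLUB (range fun n : ℕ => x ⊓ n • g) x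

namespace IsSupOfInfNsmul

variable {g : A}

lemma of_isLUB {P : Set A} {p : A} (hP : ∀ x ∈ P, IsSupOfInfNsmul g x) (hp : IsLUB P p) :
    IsSupOfInfNsmul g p where
  left := by rintro _ ⟨n, rfl⟩; exact inf_le_left
  right z hz := hp.2 fun x hx => (hP x hx).2 <| by
    rintro _ ⟨n, rfl⟩
    exact (inf_le_inf_right _ (hp.1 hx)).trans (hz ⟨n, rfl⟩)

lemma self : IsSupOfInfNsmul g g where
  left := by rintro _ ⟨n, rfl⟩; exact inf_le_left
  right z hz := by simpa using hz ⟨1, rfl⟩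

lemma zero : IsSupOfInfNsmul g 0 where
  left := by rintro _ ⟨n, rfl⟩; exact inf_le_left
  right z hz := by simpa using hz ⟨0, rfl⟩

end IsSupOfInfNsmul

def nsmulBand (g : A) : Set A :=
  {x | IsSupOfInfNsmul g |x|}

end LatticeGroup

section LatticeOrderedGroup

variable {A : Type*} [Lattice A] [AddCommGroup A] [AddLeftMono A]

lemma absl_eq_abs (x : A) : absl x = |x| := by
  rw [absl, ← posPart_def, ← negPart_def, posPart_add_negPart]

lemma abs_le_abs_add_abs_of_le_of_le {a x c : A} (hax : a ≤ x) (hxc : x ≤ c) :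
    |x| ≤ |a| + |c| :=
  abs_le'.2 ⟨(hxc.trans (le_abs_self c)).trans (le_add_of_nonneg_left (abs_nonneg a)),
    ((neg_le_neg_iff.2 hax).trans (neg_le_abs a)).trans (le_add_of_nonneg_right (abs_nonneg c))⟩

lemma inf_add_le_inf_add_inf {x u v : A} (hx : 0 ≤ x) (hu : 0 ≤ u) (hv : 0 ≤ v) :
    x ⊓ (u + v) ≤ x ⊓ u + x ⊓ v :=
  calc x ⊓ (u + v) ≤ (x ⊓ u + x) ⊓ (x ⊓ u + v) := by
        refine le_inf (inf_le_left.trans (le_add_of_nonneg_left (le_inf hx hu))) ?_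
        rw [inf_add]
        exact inf_le_inf_right _ (le_add_of_nonneg_right hv)
    _ = x ⊓ u + x ⊓ v := (add_inf _ _ _).symm

lemma nsmul_inf_eq_zero {x y : A} (hx : 0 ≤ x) (hy : 0 ≤ y) (hxy : x ⊓ y = 0) (n : ℕ) :
    n • x ⊓ y = 0 := by
  induction n with
  | zero => simpa using inf_eq_left.2 hy
  | succ n ih =>
    refine le_antisymm ?_ (le_inf (nsmul_nonneg hx _) hy)
    calc (n + 1) • x ⊓ y = y ⊓ (n • x + x) := by rw [succ_nsmul, inf_comm]
      _ ≤ y ⊓ n • x + y ⊓ x := inf_add_le_inf_add_inf hy (nsmul_nonneg hx n) hx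
      _ = 0 := by rw [inf_comm, ih, inf_comm, hxy, add_zero]

lemma le_of_le_add_of_inf_eq_zero {x a b : A} (hx : 0 ≤ x) (ha : 0 ≤ a) (hb : 0 ≤ b)
    (hxb : x ⊓ b = 0) (h : x ≤ a + b) : x ≤ a :=
  calc x = x ⊓ (a + b) := (inf_eq_left.2 h).symm
    _ ≤ x ⊓ a + x ⊓ b := inf_add_le_inf_add_inf hx ha hb
    _ = x ⊓ a := by rw [hxb, add_zero]
    _ ≤ a := inf_le_right

lemma nonneg_of_abs_inf_abs_eq_zero {a b : A} (hab : |a| ⊓ |b| = 0) (h : 0 ≤ a + b) : 0 ≤ a := by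
  have hab' : a⁻ ≤ b⁺ := sup_le_sup_right (neg_le_iff_add_nonneg.2 (by rwa [add_comm])) 0
  have : a⁻ ≤ |a| ⊓ |b| :=
    le_inf (sup_le (neg_le_abs a) (abs_nonneg a))
      (hab'.trans (sup_le (le_abs_self b) (abs_nonneg b)))
  exact negPart_eq_zero.1 (le_antisymm (hab ▸ this) (negPart_nonneg a))

lemma nonpos_of_isLUB_range_nsmul {g a : A} (h : IsLUB (range fun n : ℕ => n • g) a) : g ≤ 0 := by
  have : a ≤ a - g := h.2 <| by
    rintro _ ⟨n, rfl⟩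
    rw [le_sub_iff_add_le, ← succ_nsmul]
    exact h.1 ⟨n + 1, rfl⟩
  simpa using this

lemma isIdeal_of_abs {I : Set A} (zero_mem : (0 : A) ∈ I)
    (solid : ∀ ⦃x y : A⦄, |x| ≤ |y| → y ∈ I → x ∈ I)
    (abs_add_abs_mem : ∀ ⦃x y : A⦄, x ∈ I → y ∈ I → |x| + |y| ∈ I) : IsIdeal I := by
  have add_mem : ∀ ⦃x y : A⦄, x ∈ I → y ∈ I → x + y ∈ I := fun x y hx hy =>
    solid ((abs_add_le x y).trans_eq (abs_of_nonneg (by positivity)).symm)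
      (abs_add_abs_mem hx hy)
  have neg_mem : ∀ ⦃x : A⦄, x ∈ I → -x ∈ I := fun x hx => solid (abs_neg x).le hx
  have convex : ∀ ⦃a x c : A⦄, a ∈ I → c ∈ I → a ≤ x → x ≤ c → x ∈ I := fun a x c ha hc hax hxc =>
    solid ((abs_le_abs_add_abs_of_le_of_le hax hxc).trans_eq (abs_of_nonneg (by positivity)).symm)
      (abs_add_abs_mem ha hc)
  refine ⟨zero_mem, add_mem, neg_mem, fun x y hx hy => ?_, fun x y hx hy => ?_, convex⟩
  · exact convex hx (abs_add_abs_mem hx hy) le_sup_left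
      (sup_le ((le_abs_self x).trans (le_add_of_nonneg_right (abs_nonneg y)))
        ((le_abs_self y).trans (le_add_of_nonneg_left (abs_nonneg x))))
  · refine convex (neg_mem (abs_add_abs_mem hx hy)) hx ?_ inf_le_left
    exact le_inf (neg_le.1 ((neg_le_abs x).trans (le_add_of_nonneg_right (abs_nonneg y))))
      (neg_le.1 ((neg_le_abs y).trans (le_add_of_nonneg_left (abs_nonneg x))))

namespace IsSupOfInfNsmul

variable {g x y : A}

lemma of_le (hx : IsSupOfInfNsmul g x) (hyx : y ≤ x) : IsSupOfInfNsmul g y where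
  left := by rintro _ ⟨n, rfl⟩; exact inf_le_left
  right z hz := by
    have hx_le : x ≤ z + (x - y) := hx.2 <| by
      rintro _ ⟨n, rfl⟩
      calc x ⊓ n • g ≤ (x - y) + y ⊓ n • g := by
            rw [add_inf]
            exact le_inf (by simp) (inf_le_right.trans (le_add_of_nonneg_left (sub_nonneg.2 hyx)))
        _ ≤ z + (x - y) := by rw [add_comm]; exact add_le_add_left (hz ⟨n, rfl⟩) _
    simpa using sub_le_iff_le_add.2 hx_le

lemma add (hx : IsSupOfInfNsmul g x) (hy : IsSupOfInfNsmul g y) : IsSupOfInfNsmul g (x + y) where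
  left := by rintro _ ⟨n, rfl⟩; exact inf_le_left
  right z hz := by
    have hsum : ∀ m n : ℕ, x ⊓ n • g + y ⊓ m • g ≤ z := fun m n =>
      le_trans (le_inf (add_le_add inf_le_left inf_le_left)
        (by rw [add_nsmul]; exact add_le_add inf_le_right inf_le_right)) (hz ⟨n + m, rfl⟩)
    have hx_le : ∀ m : ℕ, x ≤ z - y ⊓ m • g := fun m => hx.2 <| by
      rintro _ ⟨n, rfl⟩
      exact le_sub_iff_add_le.2 (hsum m n)
    have hy_le : y ≤ z - x := hy.2 <| by
      rintro _ ⟨m, rfl⟩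
      exact le_sub_iff_add_le'.2 (le_sub_iff_add_le.1 (hx_le m))
    exact le_sub_iff_add_le'.1 hy_le

end IsSupOfInfNsmul

lemma isBand_nsmulBand (g : A) : IsBand (nsmulBand g) where
  ideal := isIdeal_of_abs (by simpa [nsmulBand] using IsSupOfInfNsmul.zero)
    (fun _ _ hxy hy => IsSupOfInfNsmul.of_le hy hxy)
    (fun x y hx hy => by
      simpa [nsmulBand, abs_of_nonneg (add_nonneg (abs_nonneg x) (abs_nonneg y))] using hx.add hy)
  sup_closed S hS s hs := by
    rcases S.eq_empty_or_nonempty with rfl | ⟨x₀, hx₀⟩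
    · have hbot := isLUB_empty_iff.1 hs
      have : s = 0 := le_antisymm (hbot 0) (by simpa using hbot (s + s))
      simpa [nsmulBand, this] using IsSupOfInfNsmul.zero
    · have hpos : IsSupOfInfNsmul g s⁺ := by
        rw [posPart_def, sup_comm]
        refine IsSupOfInfNsmul.of_isLUB ?_ (hs.insert 0)
        rintro x (rfl | hx)
        exacts [IsSupOfInfNsmul.zero, (hS hx).of_le (le_abs_self x)]
      have hneg : IsSupOfInfNsmul g s⁻ :=
        (hS hx₀).of_le ((sup_le_sup_right (neg_le_neg_iff.2 (hs.1 hx₀)) 0).trans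
          (sup_le (neg_le_abs x₀) (abs_nonneg x₀)))
      simpa [nsmulBand, posPart_add_negPart] using hpos.add hneg

end LatticeOrderedGroup

/-- Every abelian ℓ-group with the principal projection property is Archimedean. -/
theorem statement1 {A : Type*} [Lattice A] [AddCommGroup A]
    [CovariantClass A A (· + ·) (· ≤ ·)]
    (h : ∀ x : A, IsProjectionBand (principalBand x)) :
    IsArch A := by
  intro g v hgv
  have hg : 0 ≤ g := by simpa using (hgv 1 le_rfl).1
  have hv : 0 ≤ v := hg.trans (by simpa using (hgv 1 le_rfl).2)
  obtain ⟨a, ha, b, hb, rfl⟩ := h g v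
  have hab : |a| ⊓ |b| = 0 := by simpa [absl_eq_abs, inf_comm] using hb a ha
  have ha0 : 0 ≤ a := nonneg_of_abs_inf_abs_eq_zero hab hv
  have hb0 : 0 ≤ b := nonneg_of_abs_inf_abs_eq_zero (by rwa [inf_comm]) (by rwa [add_comm])
  have hgb : g ⊓ b = 0 := by
    simpa [absl_eq_abs, abs_of_nonneg hg, abs_of_nonneg hb0, inf_comm] using hb g fun _ hI => hI.2
  have hnga : ∀ n : ℕ, n • g ≤ a := fun n =>
    le_of_le_add_of_inf_eq_zero (nsmul_nonneg hg n) ha0 hb0 (nsmul_inf_eq_zero hg hb0 hgb n) <| by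
      rcases n.eq_zero_or_pos with rfl | hn
      exacts [by simpa using hv, (hgv n hn).2]
  have haJ : a ∈ nsmulBand g :=
    ha _ ⟨isBand_nsmulBand g, by simpa [nsmulBand, abs_of_nonneg hg] using IsSupOfInfNsmul.self⟩
  have hlub : IsLUB (range fun n : ℕ => n • g) a := by
    simpa [nsmulBand, IsSupOfInfNsmul, abs_of_nonneg ha0, inf_eq_right.2 (hnga _)] using haJ
  exact le_antisymm (nonpos_of_isLUB_range_nsmul hlub) hg
end

section
/- Let G be an abelian ℓ-group with a strong unit u and let χ ∈ G be a component of u. Then every g ∈ G can be written in exactly one way as g = a + b with a ∈ χ^⊥ and b ∈ χ^⊥⊥; thus χ induces a product splitting G ≅ χ^⊥ × χ^⊥⊥. -/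
/-- A component of `u`: an element `χ` with `χ ⊓ (u - χ) = 0` and `χ ⊔ (u - χ) = u`. -/
def IsComponent {A : Type*} [Lattice A] [AddCommGroup A] (u χ : A) : Prop :=
  χ ⊓ (u - χ) = 0 ∧ χ ⊔ (u - χ) = u

/-!
The strong unit puts every `0 ≤ g` below some `n • u = n • (u - χ) + n • χ`. As `u - χ` and `χ`
are disjoint, `g = (g - g ⊓ n • χ) + g ⊓ n • χ` where the first summand lies below `n • (u - χ)`,
hence is disjoint from `χ`, and the second lies below `n • χ`, hence is disjoint from everything
disjoint from `χ`. Polars are subgroups, so `g = g⁺ - g⁻` splits as well, and the splitting is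
unique because an element of `χ^⊥ ∩ χ^⊥⊥` is disjoint from itself.
-/

theorem AddSubgroup.existsUnique_add_of_isCompl {A : Type*} [AddCommGroup A]
    {H K : AddSubgroup A} (hHK : IsCompl H K) (g : A) :
    ∃! ab : A × A, ab.1 ∈ H ∧ ab.2 ∈ K ∧ g = ab.1 + ab.2 := by
  obtain ⟨a, ha, b, hb, rfl⟩ := AddSubgroup.mem_sup.1 (hHK.sup_eq_top ▸ AddSubgroup.mem_top g)
  refine ⟨(a, b), ⟨ha, hb, rfl⟩, ?_⟩
  rintro ⟨a', b'⟩ ⟨ha', hb', hsum⟩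
  have hdiff : a' - a = b - b' := by
    rw [sub_eq_sub_iff_add_eq_add, ← hsum, add_comm]
  obtain rfl : a' = a := sub_eq_zero.1 <|
    AddSubgroup.disjoint_def.1 hHK.disjoint (sub_mem ha' ha) (hdiff ▸ sub_mem hb hb')
  obtain rfl : b' = b := (add_left_cancel hsum).symm
  rfl

theorem inf_eq_zero_of_le_of_le {α : Type*} [Lattice α] [Zero α] {x y x' y' : α}
    (hx : 0 ≤ x) (hy : 0 ≤ y) (hxx' : x ≤ x') (hyy' : y ≤ y') (h : x' ⊓ y' = 0) : x ⊓ y = 0 :=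
  le_antisymm (h ▸ inf_le_inf hxx' hyy') (le_inf hx hy)

section LatticeOrderedGroup

variable {G : Type*} [Lattice G] [AddCommGroup G] [AddLeftMono G]

theorem absl_eq_abs_s11 (g : G) : absl g = |g| := posPart_add_negPart g

theorem eq_zero_of_abs_eq_zero {x : G} (hx : |x| = 0) : x = 0 :=
  le_antisymm (hx ▸ le_abs_self x) (neg_nonpos.1 (hx ▸ neg_le_abs x))

theorem add_inf_eq_zero {a b c : G} (ha : a ⊓ c = 0) (hb : b ⊓ c = 0) : (a + b) ⊓ c = 0 := by
  have ha0 : 0 ≤ a := ha ▸ inf_le_left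
  have hb0 : 0 ≤ b := hb ▸ inf_le_left
  have hc0 : 0 ≤ c := ha ▸ inf_le_right
  have hle : (a + b) ⊓ c ≤ b := calc
    (a + b) ⊓ c ≤ (a + b) ⊓ (c + b) := inf_le_inf_left _ (le_add_of_nonneg_right hb0)
    _ = b := by rw [← inf_add, ha, zero_add]
  exact le_antisymm (hb ▸ le_inf hle inf_le_right) (le_inf (add_nonneg ha0 hb0) hc0)

theorem nsmul_inf_eq_zero_s11 {a c : G} (h : a ⊓ c = 0) (n : ℕ) : (n • a) ⊓ c = 0 := by
  induction n with
  | zero => simpa using (h ▸ inf_le_right : (0 : G) ≤ c)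
  | succ k ih => rw [succ_nsmul]; exact add_inf_eq_zero ih h

theorem sub_inf_le_of_le_add {g p q : G} (hp : 0 ≤ p) (h : g ≤ p + q) : g - g ⊓ q ≤ p := by
  rw [sub_le_iff_le_add, add_inf]
  exact le_inf (le_add_of_nonneg_left hp) h

theorem mem_polar_iff {T : Set G} {x : G} : x ∈ polar T ↔ ∀ t ∈ T, |x| ⊓ |t| = 0 := by
  show (∀ t ∈ T, absl x ⊓ absl t = 0) ↔ _
  simp only [absl_eq_abs_s11]

theorem mem_polar_singleton_iff {χ x : G} (hχ : 0 ≤ χ) : x ∈ polar {χ} ↔ |x| ⊓ χ = 0 := by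
  simp only [mem_polar_iff, Set.mem_singleton_iff, forall_eq, abs_of_nonneg hχ]

def polarAddSubgroup (T : Set G) : AddSubgroup G where
  carrier := polar T
  zero_mem' := mem_polar_iff.2 fun t _ => by simp [abs_nonneg]
  add_mem' {x y} hx hy := mem_polar_iff.2 fun t ht =>
    inf_eq_zero_of_le_of_le (abs_nonneg _) (abs_nonneg t) (abs_add_le x y) le_rfl
      (add_inf_eq_zero (mem_polar_iff.1 hx t ht) (mem_polar_iff.1 hy t ht))
  neg_mem' {x} hx := mem_polar_iff.2 fun t ht => abs_neg x ▸ mem_polar_iff.1 hx t ht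

@[simp]
theorem mem_polarAddSubgroup {T : Set G} {x : G} : x ∈ polarAddSubgroup T ↔ x ∈ polar T :=
  Iff.rfl

theorem disjoint_polarAddSubgroup_polar (T : Set G) :
    Disjoint (polarAddSubgroup T) (polarAddSubgroup (polar T)) :=
  AddSubgroup.disjoint_def.2 fun {x} hx hx' =>
    eq_zero_of_abs_eq_zero (inf_idem |x| ▸ mem_polar_iff.1 hx' x hx)

theorem mem_polarAddSubgroup_sup_of_nonneg_of_le_nsmul {u χ g : G} (hχ : χ ⊓ (u - χ) = 0)
    (hg : 0 ≤ g) {n : ℕ} (hgu : g ≤ n • u) :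
    g ∈ polarAddSubgroup {χ} ⊔ polarAddSubgroup (polar {χ}) := by
  have hχ0 : 0 ≤ χ := hχ ▸ inf_le_left
  have hnχ0 : 0 ≤ n • χ := nsmul_nonneg hχ0 n
  set b := g ⊓ n • χ
  have hb0 : 0 ≤ b := le_inf hg hnχ0
  have ha0 : 0 ≤ g - b := sub_nonneg.2 inf_le_left
  have hale : g - b ≤ n • (u - χ) := sub_inf_le_of_le_add (nsmul_nonneg (hχ ▸ inf_le_right) n)
    (by rwa [← nsmul_add, sub_add_cancel])
  refine AddSubgroup.mem_sup.2 ⟨g - b, ?_, b, ?_, sub_add_cancel g b⟩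
  · rw [mem_polarAddSubgroup, mem_polar_singleton_iff hχ0, abs_of_nonneg ha0]
    exact inf_eq_zero_of_le_of_le ha0 hχ0 hale le_rfl
      (nsmul_inf_eq_zero_s11 (by rwa [inf_comm] at hχ) n)
  · refine mem_polar_iff.2 fun t ht => ?_
    have htχ : |t| ⊓ χ = 0 := (mem_polar_singleton_iff hχ0).1 ht
    rw [abs_of_nonneg hb0]
    exact inf_eq_zero_of_le_of_le hb0 (abs_nonneg t) inf_le_right le_rfl
      (nsmul_inf_eq_zero_s11 (by rwa [inf_comm]) n)

theorem isCompl_polarAddSubgroup {u χ : G} (hu : ∀ g : G, ∃ n : ℕ, 1 ≤ n ∧ g ≤ n • u)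
    (hχ : χ ⊓ (u - χ) = 0) :
    IsCompl (polarAddSubgroup {χ}) (polarAddSubgroup (polar {χ})) := by
  refine ⟨disjoint_polarAddSubgroup_polar _, codisjoint_iff.2 (eq_top_iff.2 fun g _ => ?_)⟩
  have hsplit (x : G) (hx : 0 ≤ x) : x ∈ polarAddSubgroup {χ} ⊔ polarAddSubgroup (polar {χ}) :=
    let ⟨_, _, hxu⟩ := hu x
    mem_polarAddSubgroup_sup_of_nonneg_of_le_nsmul hχ hx hxu
  simpa only [posPart_sub_negPart] using
    sub_mem (hsplit _ (posPart_nonneg g)) (hsplit _ (negPart_nonneg g))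

end LatticeOrderedGroup

theorem statement11_general {G : Type*} [Lattice G] [AddCommGroup G]
    [CovariantClass G G (· + ·) (· ≤ ·)]
    (u : G) (hu : ∀ g : G, ∃ n : ℕ, 1 ≤ n ∧ g ≤ n • u)
    (χ : G) (hχ : IsComponent u χ) (g : G) :
    ∃! ab : G × G,
      ab.1 ∈ polar {χ} ∧ ab.2 ∈ polar (polar {χ}) ∧ g = ab.1 + ab.2 :=
  AddSubgroup.existsUnique_add_of_isCompl (isCompl_polarAddSubgroup hu hχ.1) g

/-- A component `χ` of a strong unit `u` induces a product splitting
`G ≅ χ^⊥ × χ^⊥⊥`: every `g` is uniquely a sum `a + b` with `a ∈ χ^⊥`, `b ∈ χ^⊥⊥`. -/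
theorem statement11 {G : Type*} [Lattice G] [AddCommGroup G]
    [CovariantClass G G (· + ·) (· ≤ ·)]
    (u : G) (hu0 : 0 ≤ u) (hu : ∀ g : G, ∃ n : ℕ, 1 ≤ n ∧ g ≤ n • u)
    (χ : G) (hχ : IsComponent u χ) (g : G) :
    ∃! ab : G × G,
      ab.1 ∈ polar {χ} ∧ ab.2 ∈ polar (polar {χ}) ∧ g = ab.1 + ab.2 :=
  statement11_general u hu χ hχ g
end
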